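/- arXiv:2209.06765 — 4 statements merged into one kernel-verified Lean document; each statement's English description precedes it below -/
import Mathlib

section
/- Let d ≥ 2 and let G=(V,E) be a connected, acyclic, d-regular simple graph (the infinite d-regular tree). Then for every finite nonempty subset A ⊆ V, the edge boundary satisfies #∂_E(A) ≥ (d−2)·#A + 2. -/
open Real

/-- The edge boundary of a set `A`: the edges of `G` with exactly one endpoint in `A`. -/
def edgeBoundary {V : Type*} (G : SimpleGraph V) (A : Set V) : Set (Sym2 V) :=
  {e | e ∈ G.edgeSet ∧ ∃ u w : V, e = s(u, w) ∧ u ∈ A ∧ w ∉ A}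

/-- The vertex boundary of `A`: vertices outside `A` adjacent to some vertex of `A`. -/
def vertexBoundary {V : Type*} (G : SimpleGraph V) (A : Set V) : Set V :=
  {u | u ∉ A ∧ ∃ w ∈ A, G.Adj u w}

/-- The vertex-isoperimetric profile `∂_V(N)`. -/
noncomputable def vertexProfile {V : Type*} (G : SimpleGraph V) (N : ℕ) : ℕ :=
  sInf {k : ℕ | ∃ A : Set V, A.Finite ∧ A.ncard = N ∧ (vertexBoundary G A).ncard = k}

/-- `‖∇f‖_{L¹} = ∑_{{u,w} ∈ E} |f u - f w|`. -/
noncomputable def gradL1 {V : Type*} (G : SimpleGraph V) (f : V → ℝ) : ℝ :=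
  ∑' e : G.edgeSet,
    Sym2.lift ⟨fun u w => |f u - f w|, fun u w => by dsimp only; rw [abs_sub_comm]⟩ e.1

/-- `‖∇f‖_{L^∞} = sup_{{u,w} ∈ E} |f u - f w|`. -/
noncomputable def gradLinf {V : Type*} (G : SimpleGraph V) (f : V → ℝ) : ℝ :=
  ⨆ e : G.edgeSet,
    Sym2.lift ⟨fun u w => |f u - f w|, fun u w => by dsimp only; rw [abs_sub_comm]⟩ e.1

/-- `‖∇f‖_{L^p} = (∑_{{u,w} ∈ E} |f u - f w|^p)^(1/p)` for real `p`. -/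
noncomputable def gradLp {V : Type*} (G : SimpleGraph V) (f : V → ℝ) (p : ℝ) : ℝ :=
  (∑' e : G.edgeSet,
    Sym2.lift ⟨fun u w => |f u - f w| ^ p,
      fun u w => by dsimp only; rw [abs_sub_comm]⟩ e.1) ^ (1 / p)

/-- `‖∇f‖_{L²} = (∑_{{u,w} ∈ E} |f u - f w|²)^(1/2)`. -/
noncomputable def gradL2 {V : Type*} (G : SimpleGraph V) (f : V → ℝ) : ℝ :=
  Real.sqrt (∑' e : G.edgeSet,
    Sym2.lift ⟨fun u w => |f u - f w| ^ 2,
      fun u w => by dsimp only; rw [abs_sub_comm]⟩ e.1)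

/-- `g` is the rearrangement of `f` along the enumeration `v` (with `v 0 = v₁`):
`g` is obtained from `f` by permuting its values, and the values of `g` are
non-increasing along the enumeration. -/
def IsRearrangement {V : Type*} (v : ℕ → V) (f g : V → ℝ) : Prop :=
  (∃ σ : Equiv.Perm V, g = f ∘ σ) ∧ ∀ m n : ℕ, m ≤ n → g (v n) ≤ g (v m)

/-- The grid graph `(ℤ², ℓ¹)`. -/
def gridGraph : SimpleGraph (ℤ × ℤ) where
  Adj p q := |p.1 - q.1| + |p.2 - q.2| = 1
  symm := by
    constructor
    intro p q h
    try dsimp only at h ⊢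
    rw [abs_sub_comm q.1 p.1, abs_sub_comm q.2 p.2]
    exact h
  loopless := by constructor; intro p h; simp at h

/-- One step of the counterclockwise square spiral on `ℤ²`. -/
def spiralNext : ℤ × ℤ → ℤ × ℤ := fun p =>
  if 1 ≤ p.1 ∧ p.2 = -p.1 then (p.1 + 1, p.2)
  else if 1 ≤ p.1 ∧ -p.1 ≤ p.2 ∧ p.2 < p.1 then (p.1, p.2 + 1)
  else if 1 ≤ p.2 ∧ -p.2 < p.1 ∧ p.1 ≤ p.2 then (p.1 - 1, p.2)
  else if p.1 ≤ -1 ∧ p.1 < p.2 ∧ p.2 ≤ -p.1 then (p.1, p.2 - 1)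
  else (p.1 + 1, p.2)

/-- The spiral enumeration of `ℤ²`, 0-indexed: `spiral 0 = v₁ = (0,0)`,
`spiral 1 = v₂ = (1,0)`, `spiral 2 = v₃ = (1,1)`, `spiral 3 = v₄ = (0,1)`, … -/
def spiral (n : ℕ) : ℤ × ℤ := spiralNext^[n] (0, 0)


/-! Write the boundary of a finite set `s` as `∑ u ∈ s, #(N(u) \ s)`. A finite nonempty set `s` in
a forest contains a vertex `v` with at most one neighbour in `s`: take `v ∈ s` farthest from some
`r ∈ s` among the vertices of `s` reachable from `r`; every neighbour of `v` in `s` then lies on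
the geodesic from `r` to `v`, so it is its penultimate vertex. Adding `v` back to `s \ {v}` changes
the boundary by `deg v - 2k ≥ d - 2`, where `k ≤ 1` counts the neighbours of `v` in `s`, and
induction on `#s` gives the bound. -/

open Finset

namespace SimpleGraph

variable {V : Type*} {G : SimpleGraph V}

theorem IsAcyclic.eq_penultimate_of_dist_le (hG : G.IsAcyclic) {r v w : V} {p : G.Walk r v}
    (hp : p.IsPath) (hlen : p.length = G.dist r v) (hadj : G.Adj v w)
    (hw : G.dist r w ≤ G.dist r v) : w = p.penultimate := by
  refine hG.eq_penultimate_of_adj_end hp hadj (by_contra fun hwp => ?_)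
  obtain ⟨q, hq, hqlen⟩ := (p.reachable.trans hadj.reachable).exists_path_of_dist
  have hvq := hG.mem_support_of_ne_mem_support_of_adj_of_isPath hq hp hadj.symm hwp
  have := congrArg Walk.length (hG.path_concat hp hq hadj hvq)
  rw [Walk.length_concat] at this
  omega

theorem IsAcyclic.exists_mem_neighborSet_inter_subsingleton (hG : G.IsAcyclic) {A : Set V}
    (hA : A.Finite) (hne : A.Nonempty) : ∃ v ∈ A, (G.neighborSet v ∩ A).Subsingleton := by
  obtain ⟨r, hr⟩ := hne
  obtain ⟨v, ⟨hvA, hrv⟩, hmax⟩ := Set.exists_max_image {x ∈ A | G.Reachable r x} (G.dist r)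
    (hA.subset (Set.sep_subset _ _)) ⟨r, hr, .rfl⟩
  obtain ⟨p, hp, hlen⟩ := hrv.exists_path_of_dist
  refine ⟨v, hvA, (Set.subsingleton_singleton (a := p.penultimate)).anti ?_⟩
  rintro w ⟨hadj, hwA⟩
  exact hG.eq_penultimate_of_dist_le hp hlen hadj (hmax w ⟨hwA, hrv.trans hadj.reachable⟩)

section LocallyFinite

variable [DecidableEq V] [G.LocallyFinite]

theorem edgeBoundary_coe_finset (s : Finset V) :
    edgeBoundary G s = ↑(s.biUnion fun u => (G.neighborFinset u \ s).image (s(u, ·))) := by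
  ext e
  simp only [edgeBoundary, Set.mem_ofPred_eq, coe_biUnion, Set.mem_iUnion, coe_image, coe_sdiff,
    coe_neighborFinset, Set.mem_image, Set.mem_sdiff, mem_neighborSet, mem_coe, exists_prop]
  constructor
  · rintro ⟨he, u, w, rfl, hu, hw⟩
    exact ⟨u, hu, w, ⟨he, hw⟩, rfl⟩
  · rintro ⟨u, hu, w, ⟨hadj, hw⟩, rfl⟩
    exact ⟨hadj, u, w, rfl, hu, hw⟩

theorem ncard_edgeBoundary_coe_finset (s : Finset V) :
    (edgeBoundary G s).ncard = ∑ u ∈ s, #(G.neighborFinset u \ s) := by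
  rw [edgeBoundary_coe_finset, Set.ncard_coe_finset, card_biUnion]
  · exact sum_congr rfl fun u _ => card_image_of_injective _ fun w w' => Sym2.congr_right.mp
  · intro u hu u' hu' hne
    simp only [Function.onFun, Finset.disjoint_left, mem_image, mem_sdiff]
    rintro _ ⟨w, ⟨-, hw⟩, rfl⟩ ⟨w', ⟨-, hw'⟩, he⟩
    rcases Sym2.eq_iff.mp he with ⟨rfl, -⟩ | ⟨rfl, rfl⟩
    · exact hne rfl
    · exact hw hu'

theorem sum_card_neighborFinset_sdiff_insert {v : V} {t : Finset V} (hv : v ∉ t) :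
    ∑ u ∈ insert v t, #(G.neighborFinset u \ insert v t) + 2 * #(G.neighborFinset v ∩ t) =
      ∑ u ∈ t, #(G.neighborFinset u \ t) + G.degree v := by
  have hsplit : ∑ u ∈ t, #(G.neighborFinset u \ t) =
      ∑ u ∈ t, #(G.neighborFinset u \ insert v t) + #(G.neighborFinset v ∩ t) := by
    calc ∑ u ∈ t, #(G.neighborFinset u \ t)
        = ∑ u ∈ t, (#(G.neighborFinset u \ insert v t) +
            if v ∈ G.neighborFinset u then 1 else 0) := by
          refine sum_congr rfl fun u hu => ?_
          rw [sdiff_insert]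
          split_ifs with huv
          · exact (card_erase_add_one (mem_sdiff.mpr ⟨huv, hv⟩)).symm
          · rw [erase_eq_of_notMem fun h => huv (mem_sdiff.mp h).1, add_zero]
      _ = _ := by
          rw [sum_add_distrib, sum_boole]
          congr 1
          refine congrArg card (ext fun u => ?_)
          simp [adj_comm, and_comm]
  have hv' : G.neighborFinset v \ insert v t = G.neighborFinset v \ t := by
    rw [sdiff_insert, erase_eq_of_notMem (by simp)]
  rw [sum_insert hv, hv', hsplit, ← card_neighborFinset_eq_degree,
    ← card_sdiff_add_card_inter (G.neighborFinset v) t]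
  ring

theorem IsAcyclic.sub_two_mul_card_add_two_le_sum_card_neighborFinset_sdiff
    (hG : G.IsAcyclic) {d : ℕ} (hd : 2 ≤ d) (hdeg : ∀ v, d ≤ G.degree v) (s : Finset V)
    (hs : s.Nonempty) : (d - 2) * #s + 2 ≤ ∑ u ∈ s, #(G.neighborFinset u \ s) := by
  induction s using Finset.strongInduction with
  | H s ih =>
    obtain ⟨v, hvs, hleaf⟩ := hG.exists_mem_neighborSet_inter_subsingleton s.finite_toSet hs
    have hk : #(G.neighborFinset v ∩ s.erase v) ≤ 1 := by
      refine card_le_one_iff_subsingleton_coe.mpr (Set.subsingleton_coe _ |>.mpr ?_)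
      refine hleaf.anti ?_
      simp only [coe_inter, coe_neighborFinset, coe_erase]
      exact Set.inter_subset_inter_right _ Set.sdiff_subset
    have hstep := sum_card_neighborFinset_sdiff_insert (G := G) (notMem_erase v s)
    rw [insert_erase hvs] at hstep
    have hcard := card_erase_add_one hvs
    rcases (s.erase v).eq_empty_or_nonempty with hempty | hne
    · rw [hempty] at hstep hcard
      simp only [sum_empty, inter_empty, card_empty] at hstep hcard
      have := hdeg v
      rw [← hcard]
      omega
    · have := ih _ (erase_ssubset hvs) hne
      have := hdeg v
      rw [← hcard, mul_add]
      omega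

end LocallyFinite

end SimpleGraph

theorem tree_edge_isoperimetry_general {V : Type*} (G : SimpleGraph V) (d : ℕ) (hd : 2 ≤ d)
    (hacyc : G.IsAcyclic)
    (hreg : ∀ u : V, (G.neighborSet u).ncard = d)
    (A : Set V) (hA : A.Finite) (hne : A.Nonempty) :
    (d - 2) * A.ncard + 2 ≤ (edgeBoundary G A).ncard := by
  classical
  have hfin (u : V) : (G.neighborSet u).Finite :=
    Set.finite_of_ncard_ne_zero (by rw [hreg]; omega)
  have : G.LocallyFinite := fun u => (hfin u).fintype
  have hdeg (u : V) : d ≤ G.degree u := by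
    rw [← G.card_neighborSet_eq_degree, ← Nat.card_eq_fintype_card, Nat.card_coe_set_eq, hreg]
  lift A to Finset V using hA
  rw [Set.ncard_coe_finset, G.ncard_edgeBoundary_coe_finset]
  exact hacyc.sub_two_mul_card_add_two_le_sum_card_neighborFinset_sdiff hd hdeg A
    (coe_nonempty.mp hne)

/-- On the infinite `d`-regular tree (`d ≥ 2`), every finite nonempty
set `A` of vertices satisfies `#∂_E(A) ≥ (d-2)·#A + 2`. -/
theorem tree_edge_isoperimetry {V : Type*} (G : SimpleGraph V) (d : ℕ) (hd : 2 ≤ d)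
    (hconn : G.Connected) (hacyc : G.IsAcyclic)
    (hreg : ∀ u : V, (G.neighborSet u).ncard = d)
    (A : Set V) (hA : A.Finite) (hne : A.Nonempty) :
    (d - 2) * A.ncard + 2 ≤ (edgeBoundary G A).ncard :=
  tree_edge_isoperimetry_general G d hd hacyc hreg A hA hne
end

section
/- Let d ≥ 2 and let G=(V,E) be a connected, acyclic, d-regular simple graph (the infinite d-regular tree). Then for every finite nonempty subset A ⊆ V, the vertex boundary satisfies #∂_V(A) ≥ (d−2)·#A + 2. -/
open Real

/-
The subgraph induced on `A ∪ ∂A` is a finite forest, so its degrees sum to at most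
`2 (#A + #∂A) - 2`. In it every vertex of `A` keeps all of its `d` neighbours and every vertex of
`∂A` has at least one, whence `d #A + #∂A ≤ 2 #A + 2 #∂A - 2`.
-/

open Finset

namespace SimpleGraph

variable {V : Type*} {G : SimpleGraph V}

theorem IsAcyclic.card_edgeFinset_add_one_le [Fintype V] [Nonempty V] [Fintype G.edgeSet]
    (hG : G.IsAcyclic) : #G.edgeFinset + 1 ≤ Fintype.card V := by
  classical
  obtain ⟨T, hGT, -, hT⟩ := connected_top.exists_isTree_le_of_le_of_isAcyclic le_top hG
  rw [← hT.card_edgeFinset]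
  gcongr

theorem IsAcyclic.sum_degrees_add_two_le [Fintype V] [Nonempty V] [DecidableRel G.Adj]
    (hG : G.IsAcyclic) : ∑ v, G.degree v + 2 ≤ 2 * Fintype.card V := by
  have := hG.card_edgeFinset_add_one_le
  rw [sum_degrees_eq_twice_card_edges]
  omega

theorem degree_induce_eq_ncard (s : Set V) [Fintype s] [DecidableRel (G.induce s).Adj]
    (v : s) : (G.induce s).degree v = (G.neighborSet v ∩ s).ncard := by
  have himage : G.neighborSet v ∩ s = Subtype.val '' (G.induce s).neighborSet v := by
    ext w
    simp
  rw [himage, Set.ncard_image_of_injective _ Subtype.val_injective, Set.ncard_eq_toFinset_card',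
    Set.toFinset_card, card_neighborSet_eq_degree]

theorem IsAcyclic.sum_ncard_neighborSet_inter_add_two_le (hG : G.IsAcyclic) {s : Finset V}
    (hs : s.Nonempty) : ∑ v ∈ s, (G.neighborSet v ∩ s).ncard + 2 ≤ 2 * #s := by
  classical
  have : Nonempty (s : Set V) := hs.to_subtype
  have := (hG.induce s).sum_degrees_add_two_le
  simp_rw [degree_induce_eq_ncard] at this
  convert this using 3
  · exact (Finset.sum_finset_coe _ s).symm
  · simp

theorem vertexBoundary_finite {A : Set V} (hA : A.Finite)
    (hfin : ∀ a ∈ A, (G.neighborSet a).Finite) : (vertexBoundary G A).Finite :=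
  (hA.biUnion hfin).subset fun _ ⟨_, _, ha, hadj⟩ => Set.mem_biUnion ha hadj.symm

theorem IsAcyclic.sum_ncard_neighborSet_add_two_le (hG : G.IsAcyclic) {A : Finset V}
    (hA : A.Nonempty) (hfin : ∀ a ∈ A, (G.neighborSet a).Finite) :
    ∑ a ∈ A, (G.neighborSet a).ncard + 2 ≤ 2 * #A + (vertexBoundary G A).ncard := by
  classical
  have hB := vertexBoundary_finite A.finite_toSet hfin
  set B := hB.toFinset
  have hdisj : Disjoint A B := disjoint_right.2 fun _ hu => (hB.mem_toFinset.1 hu).1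
  have hA_term :
      ∀ a ∈ A, (G.neighborSet a ∩ ↑(A ∪ B)).ncard = (G.neighborSet a).ncard := by
    intro a ha
    refine congrArg Set.ncard (Set.inter_eq_left.2 fun w hw => ?_)
    by_cases hwA : w ∈ A
    · exact mem_union_left _ hwA
    · exact mem_union_right _ (hB.mem_toFinset.2 ⟨hwA, a, ha, hw.symm⟩)
  have hB_term : ∀ u ∈ B, 1 ≤ (G.neighborSet u ∩ ↑(A ∪ B)).ncard := by
    intro u hu
    obtain ⟨-, a, ha, hua⟩ := hB.mem_toFinset.1 hu
    exact (Set.ncard_pos ((A ∪ B).finite_toSet.subset Set.inter_subset_right)).2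
      ⟨a, hua, mem_union_left _ ha⟩
  have hforest :=
    hG.sum_ncard_neighborSet_inter_add_two_le (hA.mono (subset_union_left (s₂ := B)))
  rw [sum_union hdisj, card_union_of_disjoint hdisj, sum_congr rfl hA_term] at hforest
  have := card_nsmul_le_sum B _ 1 hB_term
  rw [smul_eq_mul, mul_one] at this
  have hB_card : (vertexBoundary G A).ncard = #B := Set.ncard_eq_toFinset_card _ hB
  omega

end SimpleGraph

theorem tree_vertex_isoperimetry_general {V : Type*} (G : SimpleGraph V) (d : ℕ) (hd : 2 ≤ d)
    (hacyc : G.IsAcyclic)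
    (hreg : ∀ u : V, (G.neighborSet u).ncard = d)
    (A : Set V) (hA : A.Finite) (hne : A.Nonempty) :
    (d - 2) * A.ncard + 2 ≤ (vertexBoundary G A).ncard := by
  have hfin (u : V) : (G.neighborSet u).Finite :=
    Set.finite_of_ncard_pos (by rw [hreg u]; omega)
  lift A to Finset V using hA
  have key := hacyc.sum_ncard_neighborSet_add_two_le (coe_nonempty.1 hne) fun a _ => hfin a
  simp only [hreg, sum_const, smul_eq_mul] at key
  have hsplit : (d - 2) * #A + 2 * #A = #A * d := by
    rw [← add_mul, Nat.sub_add_cancel hd, mul_comm]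
  rw [Set.ncard_coe_finset]
  omega

/-- On the infinite `d`-regular tree (`d ≥ 2`), every finite nonempty
set `A` of vertices satisfies `#∂_V(A) ≥ (d-2)·#A + 2`. -/
theorem tree_vertex_isoperimetry {V : Type*} (G : SimpleGraph V) (d : ℕ) (hd : 2 ≤ d)
    (hconn : G.Connected) (hacyc : G.IsAcyclic)
    (hreg : ∀ u : V, (G.neighborSet u).ncard = d)
    (A : Set V) (hA : A.Finite) (hne : A.Nonempty) :
    (d - 2) * A.ncard + 2 ≤ (vertexBoundary G A).ncard :=
  tree_vertex_isoperimetry_general G d hd hacyc hreg A hA hne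
end

section
/- Let A ⊆ ℤ² be a finite nonempty set of n vertices of the grid graph (ℤ²,ℓ¹), and let A_x = {x ∈ ℤ : ∃ y, (x,y) ∈ A} and A_y = {y ∈ ℤ : ∃ x, (x,y) ∈ A} be its coordinate projections. Then #∂_E(A) ≥ 2·#A_x + 2·#A_y, and consequently #∂_E(A) ≥ 4·√n. -/
/-
In the Cayley graph of an abelian group with connection set `D`, the edge boundary of `A` is
the disjoint union over `d ∈ D` of the edges from `p ∈ A` to `p + d ∉ A`. For `d = (0, ±1)`
every column meeting `A` contains such a point `p` (its top or bottom point in `A`), and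
likewise every row for `d = (±1, 0)`; this gives `2·#A_x + 2·#A_y` boundary edges. Finally
`A ⊆ A_x × A_y`, so `n ≤ #A_x·#A_y`, and AM–GM turns this into `4√n ≤ 2·#A_x + 2·#A_y`.
-/

open Real

open Finset

variable {G : Type*} [AddCommGroup G] [DecidableEq G]

theorem Finset.exists_add_notMem [IsAddTorsionFree G] {S : Finset G} (hS : S.Nonempty) {d : G}
    (hd : d ≠ 0) : ∃ p ∈ S, p + d ∉ S := by
  -- Otherwise translation by `d` permutes `S`, and summing over `S` gives `#S • d = 0`.
  by_contra! hclosed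
  have hshift : S.map (addRightEmbedding d) = S :=
    eq_of_subset_of_card_le (fun q hq => by
      obtain ⟨p, hp, rfl⟩ := mem_map.1 hq; exact hclosed p hp) (card_map _).ge
  have hsum : ∑ p ∈ S, p + #S • d = ∑ p ∈ S, p := by
    conv_rhs => rw [← hshift]
    simp [sum_add_distrib]
  have : #S • d = 0 := by simpa using hsum
  exact hd ((nsmul_eq_zero_iff_right hS.card_pos.ne') |>.1 this)

def exitPoints (A : Finset G) (d : G) : Finset G := A.filter (· + d ∉ A)

theorem image_subset_image_exitPoints [IsAddTorsionFree G] {β : Type*} [DecidableEq β]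
    (A : Finset G) {d : G} (hd : d ≠ 0) {f : G → β} (hf : ∀ p, f (p + d) = f p) :
    A.image f ⊆ (exitPoints A d).image f := by
  intro x hx
  obtain ⟨a, ha, rfl⟩ := mem_image.1 hx
  obtain ⟨p, hp, hpd⟩ :=
    exists_add_notMem (S := A.filter (f · = f a)) ⟨a, mem_filter.2 ⟨ha, rfl⟩⟩ hd
  rw [mem_filter] at hp hpd
  exact mem_image.2 ⟨p, mem_filter.2 ⟨hp.1, fun h => hpd ⟨h, (hf p).trans hp.2⟩⟩, hp.2⟩

theorem card_image_le_card_exitPoints [IsAddTorsionFree G] {β : Type*} [DecidableEq β]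
    (A : Finset G) {d : G} (hd : d ≠ 0) {f : G → β} (hf : ∀ p, f (p + d) = f p) :
    #(A.image f) ≤ #(exitPoints A d) :=
  (card_le_card (image_subset_image_exitPoints A hd hf)).trans card_image_le

theorem edgeBoundary_eq_image_exitPoints {Γ : SimpleGraph G} {D : Finset G}
    (hΓ : ∀ p q, Γ.Adj p q ↔ q - p ∈ D) (A : Finset G) :
    edgeBoundary Γ A = ↑((D.sigma (exitPoints A)).image fun x => s(x.2, x.2 + x.1)) := by
  ext e
  simp only [edgeBoundary, coe_image, Set.mem_image, mem_coe, mem_sigma, exitPoints, mem_filter]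
  constructor
  · rintro ⟨he, u, w, rfl, hu, hw⟩
    refine ⟨⟨w - u, u⟩, ⟨(hΓ u w).1 he, hu, by simpa using hw⟩, by simp⟩
  · rintro ⟨⟨d, p⟩, ⟨hd, hp, hpd⟩, rfl⟩
    exact ⟨(hΓ _ _).2 (by simpa using hd), p, p + d, rfl, hp, hpd⟩

theorem ncard_edgeBoundary_eq_sum_card_exitPoints {Γ : SimpleGraph G} {D : Finset G}
    (hΓ : ∀ p q, Γ.Adj p q ↔ q - p ∈ D) (A : Finset G) :
    (edgeBoundary Γ A).ncard = ∑ d ∈ D, #(exitPoints A d) := by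
  rw [edgeBoundary_eq_image_exitPoints hΓ, Set.ncard_coe_finset, ← card_sigma]
  refine card_image_of_injOn ?_
  rintro ⟨d, p⟩ hdp ⟨d', q⟩ hdq heq
  simp only [coe_sigma, Set.mem_sigma_iff, mem_coe, exitPoints, mem_filter] at hdp hdq
  rcases Sym2.eq_iff.1 heq with ⟨rfl, h⟩ | ⟨-, h⟩
  · obtain rfl := add_left_cancel h
    rfl
  · exact (hdp.2.2 (h ▸ hdq.2.1)).elim

def gridDirections : Finset (ℤ × ℤ) := {(1, 0), (-1, 0), (0, 1), (0, -1)}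

theorem gridGraph_adj_iff (p q : ℤ × ℤ) : gridGraph.Adj p q ↔ q - p ∈ gridDirections := by
  obtain ⟨a, b⟩ := p
  obtain ⟨c, d⟩ := q
  simp only [gridGraph, gridDirections, mem_insert, mem_singleton, Prod.mk_sub_mk, Prod.ext_iff,
    Int.abs_eq_natAbs]
  omega

theorem two_mul_card_image_fst_add_two_mul_card_image_snd_le (A : Finset (ℤ × ℤ)) :
    2 * #(A.image Prod.fst) + 2 * #(A.image Prod.snd) ≤ (edgeBoundary gridGraph A).ncard := by
  have right := card_image_le_card_exitPoints A (d := (1, 0)) (by decide) (f := Prod.snd)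
    fun _ => by simp
  have left := card_image_le_card_exitPoints A (d := (-1, 0)) (by decide) (f := Prod.snd)
    fun _ => by simp
  have up := card_image_le_card_exitPoints A (d := (0, 1)) (by decide) (f := Prod.fst)
    fun _ => by simp
  have down := card_image_le_card_exitPoints A (d := (0, -1)) (by decide) (f := Prod.fst)
    fun _ => by simp
  rw [ncard_edgeBoundary_eq_sum_card_exitPoints gridGraph_adj_iff, gridDirections,
    sum_insert (by decide), sum_insert (by decide), sum_insert (by decide), sum_singleton]
  omega

theorem four_mul_sqrt_le_two_mul_add_two_mul {n a b : ℕ} (h : n ≤ a * b) :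
    4 * √(n : ℝ) ≤ 2 * a + 2 * b := by
  have hn : (n : ℝ) ≤ a * b := by exact_mod_cast h
  nlinarith [Real.sq_sqrt (Nat.cast_nonneg (α := ℝ) n), Real.sqrt_nonneg (n : ℝ),
    sq_nonneg ((a : ℝ) - b)]

theorem grid_projection_bound_general (A : Set (ℤ × ℤ)) (hA : A.Finite)
    (n : ℕ) (hn : A.ncard = n) :
    2 * (Prod.fst '' A).ncard + 2 * (Prod.snd '' A).ncard
        ≤ (edgeBoundary gridGraph A).ncard ∧
      4 * Real.sqrt n ≤ ((edgeBoundary gridGraph A).ncard : ℝ) := by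
  lift A to Finset (ℤ × ℤ) using hA
  rw [Set.ncard_coe_finset] at hn
  subst hn
  simp only [← coe_image, Set.ncard_coe_finset]
  have hproj := two_mul_card_image_fst_add_two_mul_card_image_snd_le A
  refine ⟨hproj, ?_⟩
  calc 4 * √(#A : ℝ) ≤ 2 * #(A.image Prod.fst) + 2 * #(A.image Prod.snd) :=
        four_mul_sqrt_le_two_mul_add_two_mul <|
          (card_le_card subset_product).trans_eq (card_product _ _)
    _ ≤ _ := by exact_mod_cast hproj

/-- For a finite nonempty `A ⊆ ℤ²` with `n` elements, the edge
boundary in the grid graph satisfies `#∂_E(A) ≥ 2·#A_x + 2·#A_y` where `A_x, A_y`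
are the coordinate projections, and consequently `#∂_E(A) ≥ 4√n`. -/
theorem grid_projection_bound (A : Set (ℤ × ℤ)) (hA : A.Finite) (hne : A.Nonempty)
    (n : ℕ) (hn : A.ncard = n) :
    2 * (Prod.fst '' A).ncard + 2 * (Prod.snd '' A).ncard
        ≤ (edgeBoundary gridGraph A).ncard ∧
      4 * Real.sqrt n ≤ ((edgeBoundary gridGraph A).ncard : ℝ) :=
  grid_projection_bound_general A hA n hn
end

section
/- Let f : ℕ×{0,1} → ℝ_{≥0} be finitely supported on the ladder graph and let f* denote its rearrangement with respect to the snake enumeration. Then ‖∇f*‖_{L¹} ≤ ‖∇f‖_{L¹} and ‖∇f*‖_{L^∞} ≤ 2·‖∇f‖_{L^∞}. -/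
open Real

/-- The ladder graph on `ℕ × {0,1}`: `(m,i)` adjacent to `(n,j)` iff `|m-n|+|i-j| = 1`. -/
def ladderGraph : SimpleGraph (ℕ × Fin 2) where
  Adj a b := |(a.1 : ℤ) - b.1| + |(a.2.1 : ℤ) - b.2.1| = 1
  symm := by
    constructor
    intro a b h
    try dsimp only at h ⊢
    rw [abs_sub_comm (b.1 : ℤ) (a.1 : ℤ), abs_sub_comm (b.2.1 : ℤ) (a.2.1 : ℤ)]
    exact h
  loopless := by constructor; intro a h; simp at h

/-- The snake enumeration of `ℕ × {0,1}`, 0-indexed: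
`v₁ = (0,0), v₂ = (0,1), v₃ = (1,1), v₄ = (1,0), v₅ = (2,0), v₆ = (2,1), …` -/
def snake (n : ℕ) : ℕ × Fin 2 :=
  (n / 2, if n % 4 = 1 ∨ n % 4 = 2 then 1 else 0)

/-!
For `L¹`, the coarea formula `‖∇f‖₁ = ∫ |∂{f > t}| dt` reduces the claim to an
edge-isoperimetric inequality, because each superlevel set of `f*` is the initial snake segment
with as many vertices as the corresponding superlevel set of `f`. On the ladder, a segment of
`N ≥ 1` vertices has at most two boundary edges when `N` is even or `N = 1` and at most three
otherwise, whereas every nonempty finite set has at least two, and at least three when its size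
is odd and not 1.

For `L^∞`, every nonempty finite set has at least two outer neighbours. The `k + 1` vertices
carrying the largest values of `f` therefore have an outer neighbour outside `{f > f*(v_{k+3})}`,
which has at most `k + 2` elements; so `f*(v_{k+1}) - f*(v_{k+3}) ≤ ‖∇f‖_∞`. Adjacent vertices
are at most three apart in the snake order, which gives the factor 2.
-/

open Set MeasureTheory Function

section GraphGradient

variable {V : Type*} (G : SimpleGraph V)

noncomputable def edgeDiff (f : V → ℝ) : Sym2 V → ℝ :=
  Sym2.lift ⟨fun u w => |f u - f w|, fun _ _ => abs_sub_comm _ _⟩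

@[simp] lemma edgeDiff_mk (f : V → ℝ) (u w : V) : edgeDiff f s(u, w) = |f u - f w| := rfl

lemma mk_mem_edgeBoundary_iff {A : Set V} {u w : V} :
    s(u, w) ∈ edgeBoundary G A ↔ G.Adj u w ∧ (u ∈ A ↔ w ∉ A) := by
  simp only [edgeBoundary, mem_ofPred_eq, SimpleGraph.mem_edgeSet, Sym2.eq_iff]
  constructor
  · rintro ⟨h, u', w', (⟨rfl, rfl⟩ | ⟨rfl, rfl⟩), hu, hw⟩ <;> tauto
  · rintro ⟨h, hA⟩
    by_cases hu : u ∈ A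
    · exact ⟨h, u, w, Or.inl ⟨rfl, rfl⟩, hu, hA.1 hu⟩
    · exact ⟨h, w, u, Or.inr ⟨rfl, rfl⟩, by tauto, hu⟩

lemma mk_mem_edgeBoundary_superlevel_iff {f : V → ℝ} {t : ℝ} {u w : V} :
    s(u, w) ∈ edgeBoundary G {x | t < f x} ↔
      G.Adj u w ∧ t ∈ Ico (min (f u) (f w)) (max (f u) (f w)) := by
  rw [mk_mem_edgeBoundary_iff, mem_ofPred_eq, mem_ofPred_eq, mem_Ico, min_le_iff, lt_max_iff,
    ← not_lt, ← not_lt]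
  tauto

lemma mk_mem_edgeBoundary {A : Set V} {u w : V} (h : G.Adj u w) (hu : u ∈ A) (hw : w ∉ A) :
    s(u, w) ∈ edgeBoundary G A :=
  ⟨h, u, w, rfl, hu, hw⟩

lemma edgeBoundary_univ : edgeBoundary G univ = ∅ :=
  eq_empty_of_forall_notMem fun _ ⟨_, _, _, _, _, hw⟩ => hw (mem_univ _)

lemma edgeBoundary_subset_biUnion_incidenceSet (A : Set V) :
    edgeBoundary G A ⊆ ⋃ v ∈ A, G.incidenceSet v := by
  rintro _ ⟨he, u, w, rfl, hu, -⟩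
  exact mem_biUnion hu ⟨he, Sym2.mem_mk_left u w⟩

lemma vertexBoundary_subset_biUnion_neighborSet (A : Set V) :
    vertexBoundary G A ⊆ ⋃ v ∈ A, G.neighborSet v := by
  rintro u ⟨-, w, hw, hwu⟩
  exact mem_biUnion hw hwu.symm

lemma mk_mem_biUnion_incidenceSet_support {f : V → ℝ} {u w : V} (h : G.Adj u w)
    (hne : f u ≠ f w) : s(u, w) ∈ ⋃ v ∈ support f, G.incidenceSet v := by
  by_cases hu : f u = 0
  · exact mem_biUnion (x := w) (by rwa [mem_support, ← hu, ne_comm]) ⟨h, Sym2.mem_mk_right u w⟩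
  · exact mem_biUnion (x := u) hu ⟨h, Sym2.mem_mk_left u w⟩

lemma edgeBoundary_superlevel_subset_biUnion_incidenceSet (f : V → ℝ) (t : ℝ) :
    edgeBoundary G {x | t < f x} ⊆ ⋃ v ∈ support f, G.incidenceSet v := by
  rintro _ ⟨he, u, w, rfl, hu, hw⟩
  exact mk_mem_biUnion_incidenceSet_support G he fun h => hw (by rwa [mem_ofPred_eq, ← h])

lemma indicator_edgeDiff_eq_zero_of_notMem {f : V → ℝ} {e : Sym2 V}
    (he : e ∉ ⋃ v ∈ support f, G.incidenceSet v) : G.edgeSet.indicator (edgeDiff f) e = 0 := by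
  induction e using Sym2.ind with
  | h u w =>
    refine indicator_apply_eq_zero.2 fun h => ?_
    rw [edgeDiff_mk, abs_eq_zero, sub_eq_zero]
    by_contra hne
    exact he (mk_mem_biUnion_incidenceSet_support G h hne)

lemma indicator_edgeBoundary_superlevel (f : V → ℝ) {u w : V} (h : G.Adj u w) :
    (fun t => (edgeBoundary G {x | t < f x}).indicator (1 : Sym2 V → ℝ) s(u, w)) =
      (Ico (min (f u) (f w)) (max (f u) (f w))).indicator 1 := by
  ext t
  by_cases ht : t ∈ Ico (min (f u) (f w)) (max (f u) (f w))
  · rw [indicator_of_mem ht, indicator_of_mem ((mk_mem_edgeBoundary_superlevel_iff G).2 ⟨h, ht⟩),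
      Pi.one_apply, Pi.one_apply]
  · rw [indicator_of_notMem ht,
      indicator_of_notMem fun h' => ht ((mk_mem_edgeBoundary_superlevel_iff G).1 h').2]

lemma indicator_edgeBoundary_of_notMem_edgeSet (f : V → ℝ) {e : Sym2 V} (he : e ∉ G.edgeSet) :
    (fun t => (edgeBoundary G {x | t < f x}).indicator (1 : Sym2 V → ℝ) e) = 0 := by
  ext t
  exact indicator_of_notMem (fun h => he h.1) _

lemma integrable_indicator_edgeBoundary_superlevel (f : V → ℝ) (e : Sym2 V) :
    Integrable fun t => (edgeBoundary G {x | t < f x}).indicator (1 : Sym2 V → ℝ) e := by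
  by_cases he : e ∈ G.edgeSet
  · induction e using Sym2.ind with
    | h u w =>
      rw [indicator_edgeBoundary_superlevel G f he]
      exact (integrable_indicator_iff measurableSet_Ico).2
        (integrableOn_const measure_Ico_lt_top.ne)
  · rw [indicator_edgeBoundary_of_notMem_edgeSet G f he]
    exact integrable_zero _ _ _

lemma integral_indicator_edgeBoundary_superlevel (f : V → ℝ) (e : Sym2 V) :
    ∫ t, (edgeBoundary G {x | t < f x}).indicator (1 : Sym2 V → ℝ) e =
      G.edgeSet.indicator (edgeDiff f) e := by
  by_cases he : e ∈ G.edgeSet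
  · induction e using Sym2.ind with
    | h u w =>
      rw [indicator_edgeBoundary_superlevel G f he, integral_indicator_one measurableSet_Ico,
        Real.volume_real_Ico_of_le min_le_max, max_sub_min_eq_abs', indicator_of_mem he,
        edgeDiff_mk]
  · rw [indicator_edgeBoundary_of_notMem_edgeSet G f he, indicator_of_notMem he]
    exact integral_zero _ _

lemma ncard_eq_sum_indicator_one {α : Type*} {s : Set α} {E : Finset α} (h : s ⊆ E) :
    (s.ncard : ℝ) = ∑ e ∈ E, s.indicator 1 e := by
  have hs : s.Finite := E.finite_toSet.subset h
  rw [← hs.coe_toFinset, Finset.sum_indicator_subset _ (by simpa using h), ncard_coe_finset]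
  simp

lemma gradLinf_nonneg (f : V → ℝ) : 0 ≤ gradLinf G f :=
  Real.iSup_nonneg fun e => by
    induction e.1 using Sym2.ind with
    | h u w => exact abs_nonneg _

lemma abs_sub_le_gradLinf {f : V → ℝ} (hf : (range f).Finite) {u w : V} (h : G.Adj u w) :
    |f u - f w| ≤ gradLinf G f := by
  have hbdd : BddAbove (range fun e : G.edgeSet => edgeDiff f e) := by
    refine (hf.image2 (fun a b => |a - b|) hf).bddAbove.mono ?_
    rintro _ ⟨⟨e, -⟩, rfl⟩
    induction e using Sym2.ind with
    | h u w => exact ⟨f u, mem_range_self u, f w, mem_range_self w, rfl⟩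
  exact le_ciSup hbdd (⟨s(u, w), h⟩ : G.edgeSet)

lemma sub_le_gradLinf_of_ncard_lt {f : V → ℝ} (hf : (range f).Finite) {A : Set V} {s t : ℝ}
    (hs : ∀ x ∈ A, s ≤ f x) (ht : {x | t < f x}.Finite)
    (hcard : {x | t < f x}.ncard < A.ncard + (vertexBoundary G A).ncard) :
    s - t ≤ gradLinf G f := by
  rcases le_or_gt s t with hst | hts
  · linarith [gradLinf_nonneg G f]
  by_cases hw : ∃ w ∈ vertexBoundary G A, f w ≤ t
  · obtain ⟨w, ⟨-, u, hu, hwu⟩, hwt⟩ := hw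
    calc s - t ≤ f u - f w := by linarith [hs u hu]
      _ ≤ |f u - f w| := le_abs_self _
      _ ≤ gradLinf G f := abs_sub_le_gradLinf G hf hwu.symm
  · push Not at hw
    have hsub : A ∪ vertexBoundary G A ⊆ {x | t < f x} :=
      union_subset (fun x hx => hts.trans_le (hs x hx)) hw
    have hdisj : Disjoint A (vertexBoundary G A) := disjoint_left.2 fun x hx hx' => hx'.1 hx
    have := ncard_le_ncard hsub ht
    rw [ncard_union_eq hdisj (ht.subset (subset_union_left.trans hsub))
      (ht.subset (subset_union_right.trans hsub))] at this
    omega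

variable [G.LocallyFinite]

lemma finite_biUnion_incidenceSet {A : Set V} (hA : A.Finite) :
    (⋃ v ∈ A, G.incidenceSet v).Finite := by
  classical
  exact hA.biUnion fun v _ => (G.incidenceSet v).toFinite

lemma edgeBoundary_finite {A : Set V} (hA : A.Finite) : (edgeBoundary G A).Finite :=
  (finite_biUnion_incidenceSet G hA).subset (edgeBoundary_subset_biUnion_incidenceSet G A)

lemma vertexBoundary_finite {A : Set V} (hA : A.Finite) : (vertexBoundary G A).Finite :=
  (hA.biUnion fun v _ => (G.neighborSet v).toFinite).subset
    (vertexBoundary_subset_biUnion_neighborSet G A)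

lemma ncard_edgeBoundary_superlevel_eq_sum {f : V → ℝ} (hf : (support f).Finite) (t : ℝ) :
    ((edgeBoundary G {x | t < f x}).ncard : ℝ) =
      ∑ e ∈ (finite_biUnion_incidenceSet G hf).toFinset,
        (edgeBoundary G {x | t < f x}).indicator 1 e :=
  ncard_eq_sum_indicator_one
    (by simpa using edgeBoundary_superlevel_subset_biUnion_incidenceSet G f t)

theorem integrable_ncard_edgeBoundary_superlevel {f : V → ℝ} (hf : (support f).Finite) :
    Integrable fun t => ((edgeBoundary G {x | t < f x}).ncard : ℝ) := by
  simp_rw [ncard_edgeBoundary_superlevel_eq_sum G hf]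
  exact integrable_finsetSum _ fun e _ => integrable_indicator_edgeBoundary_superlevel G f e

theorem gradL1_eq_integral_ncard_edgeBoundary {f : V → ℝ} (hf : (support f).Finite) :
    gradL1 G f = ∫ t, ((edgeBoundary G {x | t < f x}).ncard : ℝ) := by
  have hE := finite_biUnion_incidenceSet G hf
  calc gradL1 G f = ∑' e, G.edgeSet.indicator (edgeDiff f) e := tsum_subtype _ _
    _ = ∑ e ∈ hE.toFinset, G.edgeSet.indicator (edgeDiff f) e :=
      tsum_eq_sum fun e he => indicator_edgeDiff_eq_zero_of_notMem G (by simpa using he)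
    _ = ∑ e ∈ hE.toFinset, ∫ t, (edgeBoundary G {x | t < f x}).indicator 1 e := by
      simp_rw [integral_indicator_edgeBoundary_superlevel]
    _ = ∫ t, ((edgeBoundary G {x | t < f x}).ncard : ℝ) := by
      rw [← integral_finsetSum _ fun e _ => integrable_indicator_edgeBoundary_superlevel G f e]
      simp_rw [ncard_edgeBoundary_superlevel_eq_sum G hf]

end GraphGradient

namespace IsRearrangement

variable {V : Type*} (G : SimpleGraph V) {e : ℕ ≃ V} {f fstar : V → ℝ}

lemma finite_support (hre : IsRearrangement e f fstar) (hf : (support f).Finite) :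
    (support fstar).Finite := by
  obtain ⟨⟨σ, rfl⟩, -⟩ := hre
  exact hf.preimage σ.injective.injOn

lemma superlevel_finite_iff (hre : IsRearrangement e f fstar) (t : ℝ) :
    {x | t < fstar x}.Finite ↔ {x | t < f x}.Finite := by
  obtain ⟨⟨σ, rfl⟩, -⟩ := hre
  change (σ ⁻¹' {x | t < f x}).Finite ↔ _
  exact ⟨fun h => h.of_preimage σ.surjective, fun h => h.preimage σ.injective.injOn⟩

lemma ncard_superlevel (hre : IsRearrangement e f fstar) (t : ℝ) :
    {x | t < fstar x}.ncard = {x | t < f x}.ncard := by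
  obtain ⟨⟨σ, rfl⟩, -⟩ := hre
  exact ncard_preimage_of_injective_subset_range (s := {x | t < f x}) σ.injective (by simp)

lemma superlevel_eq_univ_or_image_Iio (hre : IsRearrangement e f fstar) (t : ℝ) :
    {x | t < fstar x} = univ ∨ ∃ N, {x | t < fstar x} = e '' Iio N := by
  have hS : {x | t < fstar x} = e '' {n | t < fstar (e n)} := by ext x; simp
  have hlow : IsLowerSet {n | t < fstar (e n)} := fun _ _ hba ha =>
    lt_of_lt_of_le ha (hre.2 _ _ hba)
  rcases hlow.eq_univ_or_Iio with h | ⟨N, h⟩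
  · left; rw [hS, h, image_univ, e.range_eq_univ]
  · exact Or.inr ⟨N, by rw [hS, h]⟩

lemma superlevel_eq_image_Iio (hre : IsRearrangement e f fstar) {t : ℝ}
    (ht : {x | t < f x}.Finite) : {x | t < fstar x} = e '' Iio {x | t < f x}.ncard := by
  rcases hre.superlevel_eq_univ_or_image_Iio t with h | ⟨N, h⟩
  · have hfin : (univ : Set V).Finite := h ▸ (hre.superlevel_finite_iff t).2 ht
    exact absurd (hfin.preimage e.injective.injOn) (by simpa using infinite_univ)
  · rw [h, ← hre.ncard_superlevel, h, ncard_image_of_injective _ e.injective, ncard_Iio_nat]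

lemma superlevel_eq_univ (hre : IsRearrangement e f fstar) {t : ℝ}
    (ht : {x | t < f x}.Infinite) : {x | t < fstar x} = univ := by
  rcases hre.superlevel_eq_univ_or_image_Iio t with h | ⟨N, h⟩
  · exact h
  · exact absurd ((hre.superlevel_finite_iff t).1 (h ▸ (finite_Iio N).image e)) ht

theorem gradL1_le [G.LocallyFinite]
    (hiso : ∀ A : Set V, A.Finite →
      (edgeBoundary G (e '' Iio A.ncard)).ncard ≤ (edgeBoundary G A).ncard)
    (hf : (support f).Finite) (hre : IsRearrangement e f fstar) :
    gradL1 G fstar ≤ gradL1 G f := by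
  rw [gradL1_eq_integral_ncard_edgeBoundary G (hre.finite_support hf),
    gradL1_eq_integral_ncard_edgeBoundary G hf]
  refine integral_mono_of_nonneg (ae_of_all _ fun t => Nat.cast_nonneg _)
    (integrable_ncard_edgeBoundary_superlevel G hf) (ae_of_all _ fun t => ?_)
  simp only [Nat.cast_le]
  by_cases ht : {x | t < f x}.Finite
  · rw [hre.superlevel_eq_image_Iio ht]
    exact hiso _ ht
  · rw [hre.superlevel_eq_univ ht, edgeBoundary_univ, ncard_empty]
    exact Nat.zero_le _

theorem sub_le_gradLinf {m : ℕ}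
    (hm : ∀ A : Set V, A.Finite → A.Nonempty → m ≤ (vertexBoundary G A).ncard)
    (hf : (range f).Finite) (hre : IsRearrangement e f fstar) (k : ℕ) :
    fstar (e k) - fstar (e (k + m)) ≤ gradLinf G f := by
  obtain ⟨⟨σ, rfl⟩, hanti⟩ := hre
  have hinj : Injective (σ ∘ e) := σ.injective.comp e.injective
  have hlarge : {x | (f ∘ σ) (e (k + m)) < f x} ⊆ (σ ∘ e) '' Iio (k + m) := by
    intro x hx
    refine ⟨e.symm (σ.symm x), ?_, by simp⟩
    by_contra hle
    have := hanti _ _ (not_lt.1 hle)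
    simp only [comp_apply, Equiv.apply_symm_apply] at this
    exact (not_lt.2 this) hx
  have hfin : ((σ ∘ e) '' Iio (k + m)).Finite := (finite_Iio _).image _
  refine sub_le_gradLinf_of_ncard_lt G hf (A := (σ ∘ e) '' Iic k) ?_ (hfin.subset hlarge) ?_
  · rintro _ ⟨n, hn, rfl⟩
    exact hanti n k hn
  · have hA : ((σ ∘ e) '' Iic k).ncard = k + 1 := by
      rw [ncard_image_of_injective _ hinj, ncard_Iic_nat]
    have := ncard_le_ncard hlarge hfin
    rw [ncard_image_of_injective _ hinj, ncard_Iio_nat] at this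
    have := hm ((σ ∘ e) '' Iic k) ((finite_Iic k).image _) ⟨_, mem_image_of_mem _ self_mem_Iic⟩
    omega

end IsRearrangement

section Ladder

lemma ladderGraph_adj_iff {a b : ℕ × Fin 2} : ladderGraph.Adj a b ↔
    (a.1 = b.1 ∧ a.2 ≠ b.2) ∨ (a.2 = b.2 ∧ (a.1 = b.1 + 1 ∨ b.1 = a.1 + 1)) := by
  obtain ⟨m, i⟩ := a
  obtain ⟨n, j⟩ := b
  fin_cases i <;> fin_cases j <;> simp [ladderGraph, abs_eq, sub_eq_zero] <;> omega

lemma ladderGraph_adj_succ (m : ℕ) (i : Fin 2) : ladderGraph.Adj (m, i) (m + 1, i) :=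
  ladderGraph_adj_iff.2 (Or.inr ⟨rfl, Or.inr rfl⟩)

lemma ladderGraph_adj_of_ne (m : ℕ) {i j : Fin 2} (h : i ≠ j) : ladderGraph.Adj (m, i) (m, j) :=
  ladderGraph_adj_iff.2 (Or.inl ⟨rfl, h⟩)

lemma ladderGraph_neighborSet_finite (v : ℕ × Fin 2) : (ladderGraph.neighborSet v).Finite :=
  ((finite_Iic (v.1 + 1)).prod finite_univ).subset fun w h => by
    have := ladderGraph_adj_iff.1 h
    simp only [mem_prod, mem_Iic, mem_univ, and_true]
    omega

noncomputable instance : ladderGraph.LocallyFinite := fun v =>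
  (ladderGraph_neighborSet_finite v).fintype

def snakeEquiv : ℕ ≃ ℕ × Fin 2 where
  toFun := snake
  -- the snake enters even columns at row 0 and odd columns at row 1
  invFun p := 2 * p.1 + (p.1 + p.2) % 2
  left_inv n := by
    simp only [snake]
    split_ifs <;> simp <;> omega
  right_inv := by
    rintro ⟨m, i⟩
    simp only [snake, Prod.mk.injEq]
    refine ⟨by omega, ?_⟩
    fin_cases i <;> split_ifs <;> simp_all <;> omega

lemma ladderGraph_adj_snake {a b : ℕ} (hab : a < b) (h : ladderGraph.Adj (snake a) (snake b)) :
    b = a + 1 ∨ (b = a + 3 ∧ Even a) := by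
  rw [ladderGraph_adj_iff] at h
  simp only [snake, Nat.even_iff] at h ⊢
  split_ifs at h <;> simp at h <;> omega

variable {A : Set (ℕ × Fin 2)}

lemma ladderGraph_exists_two_outgoing_edges (hA : A.Finite) (hne : A.Nonempty) :
    ∃ u₁ w₁ u₂ w₂, u₁ ∈ A ∧ w₁ ∉ A ∧ ladderGraph.Adj u₁ w₁ ∧
      u₂ ∈ A ∧ w₂ ∉ A ∧ ladderGraph.Adj u₂ w₂ ∧ w₁ ≠ w₂ := by
  obtain ⟨⟨M, j⟩, hMj, hmax⟩ := exists_max_image A Prod.fst hA hne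
  have hout : ∀ i, (M + 1, i) ∉ A := fun i hi => by simpa using hmax _ hi
  by_cases h : ∀ i, (M, i) ∈ A
  · exact ⟨_, _, _, _, h 0, hout 0, ladderGraph_adj_succ M 0, h 1, hout 1,
      ladderGraph_adj_succ M 1, by simp⟩
  · push Not at h
    obtain ⟨j', hj'⟩ := h
    exact ⟨_, _, _, _, hMj, hout j, ladderGraph_adj_succ M j, hMj, hj',
      ladderGraph_adj_of_ne M fun h => hj' (h ▸ hMj), by simp⟩

lemma two_le_ncard_vertexBoundary_ladderGraph (hA : A.Finite) (hne : A.Nonempty) :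
    2 ≤ (vertexBoundary ladderGraph A).ncard := by
  obtain ⟨u₁, w₁, u₂, w₂, hu₁, hw₁, h₁, hu₂, hw₂, h₂, hw⟩ :=
    ladderGraph_exists_two_outgoing_edges hA hne
  exact (ncard_pair hw).ge.trans <| ncard_le_ncard
    (pair_subset ⟨hw₁, u₁, hu₁, h₁.symm⟩ ⟨hw₂, u₂, hu₂, h₂.symm⟩) (vertexBoundary_finite _ hA)

lemma two_le_ncard_edgeBoundary_ladderGraph (hA : A.Finite) (hne : A.Nonempty) :
    2 ≤ (edgeBoundary ladderGraph A).ncard := by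
  obtain ⟨u₁, w₁, u₂, w₂, hu₁, hw₁, h₁, hu₂, hw₂, h₂, hw⟩ :=
    ladderGraph_exists_two_outgoing_edges hA hne
  have hne : s(u₁, w₁) ≠ s(u₂, w₂) := by
    rw [Ne, Sym2.eq_iff]
    rintro (⟨-, rfl⟩ | ⟨rfl, -⟩)
    exacts [hw rfl, hw₂ hu₁]
  exact (ncard_pair hne).ge.trans <| ncard_le_ncard
    (pair_subset (mk_mem_edgeBoundary _ h₁ hu₁ hw₁) (mk_mem_edgeBoundary _ h₂ hu₂ hw₂))
    (edgeBoundary_finite _ hA)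

lemma exists_notMem_and_succ_mem_of_odd_ncard {M : ℕ} (hmax : ∀ p ∈ A, p.1 ≤ M)
    (hfull : ∀ i, (M, i) ∈ A) (hodd : Odd A.ncard) :
    ∃ n i, (n, i) ∉ A ∧ (n + 1, i) ∈ A ∧ n + 1 ≤ M := by
  -- `A` is not the block `[0, M] × {0, 1}`, which has even size
  obtain ⟨c, hc, i, hci⟩ : ∃ c ≤ M, ∃ i, (c, i) ∉ A := by
    by_contra! h
    have : A = Iic M ×ˢ univ :=
      Subset.antisymm (fun p hp => ⟨hmax p hp, trivial⟩) fun p hp => h p.1 hp.1 p.2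
    simp [this, ncard_prod, Nat.odd_iff] at hodd
  obtain ⟨n, hn, hn1⟩ := Nat.exists_not_and_succ_of_not_zero_of_exists
    (p := fun n => (c + n, i) ∈ A) (by simpa using hci)
    ⟨M - c, by simpa [Nat.add_sub_cancel' hc] using hfull i⟩
  exact ⟨c + n, i, hn, hn1, hmax _ hn1⟩

lemma three_le_ncard_edgeBoundary_ladderGraph (hA : A.Finite) (hodd : Odd A.ncard)
    (h1 : A.ncard ≠ 1) : 3 ≤ (edgeBoundary ladderGraph A).ncard := by
  obtain ⟨⟨M, j⟩, hMj, hmax⟩ :=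
    exists_max_image A Prod.fst hA (nonempty_of_ncard_ne_zero hodd.pos.ne')
  have hout : ∀ i, (M + 1, i) ∉ A := fun i hi => by simpa using hmax _ hi
  refine (two_lt_ncard_iff (edgeBoundary_finite _ hA)).2 ?_
  by_cases hfull : ∀ i, (M, i) ∈ A
  · obtain ⟨n, i, hn, hn1, hnM⟩ := exists_notMem_and_succ_mem_of_odd_ncard hmax hfull hodd
    refine ⟨_, _, _, mk_mem_edgeBoundary _ (ladderGraph_adj_succ M 0) (hfull 0) (hout 0),
      mk_mem_edgeBoundary _ (ladderGraph_adj_succ M 1) (hfull 1) (hout 1),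
      mk_mem_edgeBoundary _ (ladderGraph_adj_succ n i).symm hn1 hn, ?_, ?_, ?_⟩ <;>
      simp <;> omega
  push Not at hfull
  obtain ⟨j', hj'⟩ := hfull
  have hjj' : j ≠ j' := fun h => hj' (h ▸ hMj)
  obtain _ | M := M
  · have hsub : A ⊆ {(0, j)} := by
      rintro ⟨c, i⟩ hci
      obtain rfl : c = 0 := Nat.le_zero.1 (hmax _ hci)
      obtain rfl : i = j := by
        by_contra hij
        exact hj' (by rwa [show j' = i by omega])
      rfl
    have := ncard_le_ncard hsub
    rw [ncard_singleton] at this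
    obtain ⟨k, hk⟩ := hodd
    omega
  have e₁ := mk_mem_edgeBoundary _ (ladderGraph_adj_succ (M + 1) j) hMj (hout j)
  have e₂ := mk_mem_edgeBoundary _ (ladderGraph_adj_of_ne (M + 1) hjj') hMj hj'
  by_cases hl : (M, j) ∈ A
  · by_cases hl' : (M, j') ∈ A
    · refine ⟨_, _, _, e₁, e₂,
        mk_mem_edgeBoundary _ (ladderGraph_adj_succ M j') hl' hj', ?_, ?_, ?_⟩ <;> simp [hjj']
    · refine ⟨_, _, _, e₁, e₂, mk_mem_edgeBoundary _ (ladderGraph_adj_of_ne M hjj') hl hl',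
        ?_, ?_, ?_⟩ <;> simp [hjj', hjj'.symm]
  · refine ⟨_, _, _, e₁, e₂, mk_mem_edgeBoundary _ (ladderGraph_adj_succ M j).symm hMj hl,
      ?_, ?_, ?_⟩ <;> simp [hjj', show M + 1 + 1 ≠ M by omega]

lemma ncard_edgeBoundary_snake_Iio_le_card {N : ℕ} (S : Finset (Sym2 (ℕ × Fin 2)))
    (hS : ∀ a b, a < N → N ≤ b → (b = a + 1 ∨ (b = a + 3 ∧ Even a)) → s(snake a, snake b) ∈ S) :
    (edgeBoundary ladderGraph (snake '' Iio N)).ncard ≤ S.card := by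
  refine (ncard_le_ncard ?_ S.finite_toSet).trans (ncard_coe_finset S).le
  rintro _ ⟨h, u, w, rfl, ⟨a, ha, rfl⟩, hw⟩
  rw [← snakeEquiv.apply_symm_apply w] at h hw ⊢
  have hb : N ≤ snakeEquiv.symm w := not_lt.1 fun hb => hw ⟨_, hb, rfl⟩
  exact hS a _ ha hb (ladderGraph_adj_snake (lt_of_lt_of_le ha hb) h)

lemma ncard_edgeBoundary_snake_Iio_le_two {N : ℕ} (hN : Even N ∨ N = 1) :
    (edgeBoundary ladderGraph (snake '' Iio N)).ncard ≤ 2 := by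
  rcases hN with ⟨m, rfl⟩ | rfl
  · refine (ncard_edgeBoundary_snake_Iio_le_card
      {s(snake (m + m - 1), snake (m + m - 1 + 1)), s(snake (m + m - 2), snake (m + m - 2 + 3))}
      ?_).trans Finset.card_le_two
    rintro a b ha hb (rfl | ⟨rfl, k, rfl⟩)
    · obtain rfl : a = m + m - 1 := by omega
      simp
    · have : k + k = m + m - 2 := by omega
      simp [this]
  · refine (ncard_edgeBoundary_snake_Iio_le_card {s(snake 0, snake 1), s(snake 0, snake 3)}
      ?_).trans Finset.card_le_two
    rintro a b ha hb (rfl | ⟨rfl, -⟩) <;> obtain rfl : a = 0 := by omega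
    all_goals simp

lemma ncard_edgeBoundary_snake_Iio_le_three (N : ℕ) :
    (edgeBoundary ladderGraph (snake '' Iio N)).ncard ≤ 3 := by
  rcases Nat.even_or_odd N with hN | ⟨m, rfl⟩
  · exact (ncard_edgeBoundary_snake_Iio_le_two (Or.inl hN)).trans (by norm_num)
  refine (ncard_edgeBoundary_snake_Iio_le_card {s(snake (2 * m), snake (2 * m + 1)),
    s(snake (2 * m), snake (2 * m + 3)), s(snake (2 * m - 2), snake (2 * m - 2 + 3))}
    ?_).trans Finset.card_le_three
  rintro a b ha hb (rfl | ⟨rfl, k, rfl⟩)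
  · obtain rfl : a = 2 * m := by omega
    simp
  · rcases (by omega : k + k = 2 * m ∨ k + k = 2 * m - 2) with h | h <;> simp [h]

theorem ncard_edgeBoundary_snake_Iio_le (hA : A.Finite) :
    (edgeBoundary ladderGraph (snake '' Iio A.ncard)).ncard ≤
      (edgeBoundary ladderGraph A).ncard := by
  rcases Nat.eq_zero_or_pos A.ncard with h0 | hpos
  · simp [h0, edgeBoundary]
  have hne := nonempty_of_ncard_ne_zero hpos.ne'
  by_cases h : Even A.ncard ∨ A.ncard = 1
  · exact (ncard_edgeBoundary_snake_Iio_le_two h).trans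
      (two_le_ncard_edgeBoundary_ladderGraph hA hne)
  · push Not at h
    exact (ncard_edgeBoundary_snake_Iio_le_three _).trans
      (three_le_ncard_edgeBoundary_ladderGraph hA (Nat.not_even_iff_odd.1 h.1) h.2)

end Ladder

theorem IsRearrangement.gradLinf_ladderGraph_le_two_mul {f fstar : ℕ × Fin 2 → ℝ}
    (hf : (range f).Finite) (hre : IsRearrangement snake f fstar) :
    gradLinf ladderGraph fstar ≤ 2 * gradLinf ladderGraph f := by
  have hgap : ∀ k, fstar (snake k) - fstar (snake (k + 2)) ≤ gradLinf ladderGraph f :=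
    IsRearrangement.sub_le_gradLinf (e := snakeEquiv) ladderGraph
      (fun _ hA hne => two_le_ncard_vertexBoundary_ladderGraph hA hne) hf hre
  have hnear {a b : ℕ} (hab : a < b) (h : ladderGraph.Adj (snake a) (snake b)) :
      |fstar (snake a) - fstar (snake b)| ≤ 2 * gradLinf ladderGraph f := by
    have hb : b ≤ a + 4 := by rcases ladderGraph_adj_snake hab h with h | h <;> omega
    rw [abs_of_nonneg (sub_nonneg.2 (hre.2 _ _ hab.le))]
    linarith [hgap a, hgap (a + 2), hre.2 _ _ hb]
  refine Real.iSup_le (fun ⟨e, he⟩ => ?_) (by linarith [gradLinf_nonneg ladderGraph f])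
  induction e using Sym2.ind with
  | h u w =>
    change |fstar u - fstar w| ≤ _
    rw [SimpleGraph.mem_edgeSet, ← snakeEquiv.apply_symm_apply u,
      ← snakeEquiv.apply_symm_apply w] at he
    rw [← snakeEquiv.apply_symm_apply u, ← snakeEquiv.apply_symm_apply w]
    rcases lt_trichotomy (snakeEquiv.symm u) (snakeEquiv.symm w) with h | h | h
    · exact hnear h he
    · exact absurd (h ▸ he) ladderGraph.irrefl
    · rw [abs_sub_comm]
      exact hnear h he.symm

theorem snake_polya_szego_general (f fstar : ℕ × Fin 2 → ℝ)
    (hsupp : (Function.support f).Finite)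
    (hre : IsRearrangement snake f fstar) :
    gradL1 ladderGraph fstar ≤ gradL1 ladderGraph f ∧
      gradLinf ladderGraph fstar ≤ 2 * gradLinf ladderGraph f :=
  ⟨IsRearrangement.gradL1_le (e := snakeEquiv) ladderGraph
      (fun _ hA => ncard_edgeBoundary_snake_Iio_le hA) hsupp hre,
    hre.gradLinf_ladderGraph_le_two_mul
      (((hsupp.image f).insert 0).subset (range_subset_insert_image_support f))⟩

/-- On the ladder graph, the snake rearrangement of a finitely
supported `f : ℕ×{0,1} → ℝ_{≥0}` satisfies `‖∇f*‖_{L¹} ≤ ‖∇f‖_{L¹}` and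
`‖∇f*‖_{L^∞} ≤ 2·‖∇f‖_{L^∞}`. -/
theorem snake_polya_szego (f fstar : ℕ × Fin 2 → ℝ)
    (hsupp : (Function.support f).Finite) (hpos : ∀ x, 0 ≤ f x)
    (hre : IsRearrangement snake f fstar) :
    gradL1 ladderGraph fstar ≤ gradL1 ladderGraph f ∧
      gradLinf ladderGraph fstar ≤ 2 * gradLinf ladderGraph f :=
  snake_polya_szego_general f fstar hsupp hre
end
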